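/- Witness pruning is sound: in the contraction of node v, if for the pair of edges (u,v), (v,w) there holds c_{(u,v)} ⊕ c_{(v,w)}(τ) ≥ d_{G'−v}(u,w)(τ) for every departure time τ, where d_{G'−v} is the earliest travel time in the graph without v, then omitting the shortcut (u,w) preserves all earliest arrival times between nodes other than v. -/
import Mathlib


/-- FIFO (no-overtaking) property of a travel-time function. -/
def FIFO (f : ℝ → ℝ) : Prop := ∀ ⦃τ τ' : ℝ⦄, τ < τ' → τ + f τ ≤ τ' + f τ'

/-- Chaining of two travel-time functions. -/
def chain (f g : ℝ → ℝ) : ℝ → ℝ := fun τ => f τ + g (τ + f τ)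

/-- A path from `s` to `t` in the graph with edge relation `E`, given as its vertex list. -/
def IsPath {V : Type*} (E : V → V → Prop) (s t : V) (p : List V) : Prop :=
  p.head? = some s ∧ p.getLast? = some t ∧ p.Chain' E

/-- Arrival time along a vertex list with time-dependent edge costs `c`, via iterated chaining. -/
def arriveP {V : Type*} (c : V → V → ℝ → ℝ) : List V → ℝ → ℝ
  | [], τ => τ
  | [_], τ => τ
  | u :: w :: rest, τ => arriveP c (w :: rest) (τ + c u w τ)

section Helpers

variable {V : Type*}

lemma FIFO_le {f : ℝ → ℝ} (hf : FIFO f) {τ τ' : ℝ} (h : τ ≤ τ') :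
    τ + f τ ≤ τ' + f τ' := by
  rcases eq_or_lt_of_le h with rfl | h
  · exact le_rfl
  · exact hf h

lemma FIFO_chain {f g : ℝ → ℝ} (hf : FIFO f) (hg : FIFO g) : FIFO (chain f g) := by
  intro τ τ' h
  have h1 : τ + f τ ≤ τ' + f τ' := hf h
  have h2 := FIFO_le hg h1
  simp only [chain]
  calc τ + (f τ + g (τ + f τ)) = (τ + f τ) + g (τ + f τ) := by ring
    _ ≤ (τ' + f τ') + g (τ' + f τ') := h2
    _ = τ' + (f τ' + g (τ' + f τ')) := by ring

lemma FIFO_min {f g : ℝ → ℝ} (hf : FIFO f) (hg : FIFO g) :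
    FIFO (fun τ => min (f τ) (g τ)) := by
  intro τ τ' h
  simp only
  calc τ + min (f τ) (g τ) = min (τ + f τ) (τ + g τ) := (min_add_add_left τ (f τ) (g τ)).symm
    _ ≤ min (τ' + f τ') (τ' + g τ') := min_le_min (hf h) (hg h)
    _ = τ' + min (f τ') (g τ') := min_add_add_left τ' (f τ') (g τ')

lemma chain'_true : ∀ p : List V, p.Chain' (fun _ _ => True)
  | [] => List.isChain_nil
  | [a] => List.isChain_singleton a
  | _ :: b :: r => List.isChain_cons_cons.mpr ⟨trivial, chain'_true (b :: r)⟩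

lemma chain'_imp_mem {R S : V → V → Prop} :
    ∀ p : List V, (∀ a ∈ p, ∀ b ∈ p, R a b → S a b) → p.Chain' R → p.Chain' S
  | [], _, _ => List.isChain_nil
  | [a], _, _ => List.isChain_singleton a
  | a :: b :: r, h, hp => by
    obtain ⟨hab, hp'⟩ := List.isChain_cons_cons.mp hp
    refine List.isChain_cons_cons.mpr ⟨h a (by simp) b (by simp) hab, ?_⟩
    exact chain'_imp_mem (b :: r) (fun x hx y hy => h x (by simp [hx]) y (by simp [hy])) hp'

lemma arriveP_mono (c : V → V → ℝ → ℝ) (R : V → V → Prop)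
    (hF : ∀ a b, R a b → FIFO (c a b)) :
    ∀ p : List V, p.Chain' R → ∀ τ τ' : ℝ, τ ≤ τ' →
      arriveP c p τ ≤ arriveP c p τ'
  | [], _, τ, τ', h => h
  | [_], _, τ, τ', h => h
  | a :: b :: r, hp, τ, τ', h => by
    obtain ⟨hab, hp'⟩ := List.isChain_cons_cons.mp hp
    have h2 : τ + c a b τ ≤ τ' + c a b τ' := FIFO_le (hF a b hab) h
    exact arriveP_mono c R hF (b :: r) hp' _ _ h2

lemma arriveP_le (c₁ c₂ : V → V → ℝ → ℝ) (R : V → V → Prop)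
    (hF : ∀ a b, R a b → FIFO (c₁ a b))
    (hle : ∀ a b, R a b → ∀ τ, c₁ a b τ ≤ c₂ a b τ) :
    ∀ p : List V, p.Chain' R → ∀ τ : ℝ, arriveP c₁ p τ ≤ arriveP c₂ p τ
  | [], _, _ => le_rfl
  | [_], _, _ => le_rfl
  | a :: b :: r, hp, τ => by
    obtain ⟨hab, hp'⟩ := List.isChain_cons_cons.mp hp
    show arriveP c₁ (b :: r) (τ + c₁ a b τ) ≤ arriveP c₂ (b :: r) (τ + c₂ a b τ)
    calc arriveP c₁ (b :: r) (τ + c₁ a b τ)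
        ≤ arriveP c₁ (b :: r) (τ + c₂ a b τ) :=
          arriveP_mono c₁ R hF (b :: r) hp' _ _ (by linarith [hle a b hab τ])
      _ ≤ arriveP c₂ (b :: r) (τ + c₂ a b τ) := arriveP_le c₁ c₂ R hF hle (b :: r) hp' _

lemma arriveP_append (c : V → V → ℝ → ℝ) :
    ∀ (q : List V) (m : V) (r : List V), q.getLast? = some m →
      ∀ τ : ℝ, arriveP c (q ++ r) τ = arriveP c (m :: r) (arriveP c q τ)
  | [], m, r, h, τ => by simp at h
  | [a], m, r, h, τ => by
    simp only [List.getLast?_singleton, Option.some.injEq] at h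
    subst h
    rfl
  | a :: b :: q, m, r, h, τ => by
    rw [List.getLast?_cons_cons] at h
    show arriveP c ((b :: q) ++ r) (τ + c a b τ) = _
    rw [arriveP_append c (b :: q) m r h (τ + c a b τ)]
    rfl

lemma IsPath_append (E : V → V → Prop) {s m t : V} {q r : List V}
    (h1 : IsPath E s m q) (h2 : IsPath E m t (m :: r)) :
    IsPath E s t (q ++ r) := by
  obtain ⟨hq1, hq2, hq3⟩ := h1
  obtain ⟨hr1, hr2, hr3⟩ := h2
  match r with
  | [] =>
    simp only [List.getLast?_singleton, Option.some.injEq] at hr2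
    subst hr2
    simpa using ⟨hq1, hq2, hq3⟩
  | b :: r' =>
    obtain ⟨hmb, hr3'⟩ := List.isChain_cons_cons.mp hr3
    refine ⟨?_, ?_, ?_⟩
    · match q, hq1 with
      | a :: q', hq1 => simpa using hq1
    · rw [List.getLast?_append_cons]
      rw [List.getLast?_cons_cons] at hr2
      exact hr2
    · refine List.IsChain.append hq3 hr3' ?_
      intro x hx y hy
      rw [hq2] at hx
      simp only [Option.mem_def, List.head?_cons, Option.some.injEq] at hx hy
      subst hx; subst hy
      exact hmb

end Helpers

section Main

variable {V : Type*} (E' : V → V → Prop) (c : V → V → ℝ → ℝ)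
    (v u₀ w₀ : V) (E'' : V → V → Prop) (c'' : V → V → ℝ → ℝ)

/-- Direction 1: any path in the pruned contracted graph can be matched in `G'`. -/
lemma dirA
    (hF : ∀ u w, FIFO (c u w))
    (hE'' : ∀ u w, E'' u w ↔ u ≠ v ∧ w ≠ v ∧
      (E' u w ∨ (E' u v ∧ E' v w ∧ ¬ (u = u₀ ∧ w = w₀))))
    (hc''min : ∀ u w, u ≠ v → w ≠ v → E' u v → E' v w → ¬ (u = u₀ ∧ w = w₀) → E' u w →
      c'' u w = fun τ => min (c u w τ) (chain (c u v) (c v w) τ))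
    (hc''sc : ∀ u w, u ≠ v → w ≠ v → E' u v → E' v w → ¬ (u = u₀ ∧ w = w₀) → ¬ E' u w →
      c'' u w = chain (c u v) (c v w))
    (hc''old : ∀ u w, ¬ (E' u v ∧ E' v w ∧ ¬ (u = u₀ ∧ w = w₀)) → c'' u w = c u w) :
    ∀ (p : List V) (s t : V) (τ : ℝ), IsPath E'' s t p →
      ∃ q, IsPath E' s t q ∧ arriveP c q τ ≤ arriveP c'' p τ
  | [], s, t, τ, hp => by simp [IsPath] at hp
  | [a], s, t, τ, hp => by
    obtain ⟨h1, h2, _⟩ := hp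
    simp only [List.head?_cons, List.getLast?_singleton, Option.some.injEq] at h1 h2
    subst h1; subst h2
    exact ⟨[a], ⟨rfl, rfl, List.isChain_singleton a⟩, le_rfl⟩
  | a :: b :: rest, s, t, τ, hp => by
    obtain ⟨h1, h2, h3⟩ := hp
    simp only [List.head?_cons, Option.some.injEq] at h1
    subst h1
    obtain ⟨hab, h3'⟩ := List.isChain_cons_cons.mp h3
    rw [List.getLast?_cons_cons] at h2
    -- recursive call on the tail
    obtain ⟨q', hq', hle'⟩ := dirA hF hE'' hc''min hc''sc hc''old (b :: rest) b t
      (τ + c'' a b τ) ⟨rfl, h2, h3'⟩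
    obtain ⟨hav, hbv, hor⟩ := (hE'' a b).mp hab
    -- build a segment from a to b in E' whose arrival is ≤ τ + c'' a b τ
    have hseg : ∃ seg, IsPath E' a b seg ∧ arriveP c seg τ ≤ τ + c'' a b τ := by
      by_cases htrio : E' a v ∧ E' v b ∧ ¬ (a = u₀ ∧ b = w₀)
      · obtain ⟨hav', hvb', hpair⟩ := htrio
        by_cases hab' : E' a b
        · rw [hc''min a b hav hbv hav' hvb' hpair hab']
          by_cases hcmp : c a b τ ≤ chain (c a v) (c v b) τ
          · refine ⟨[a, b], ⟨rfl, rfl, List.isChain_cons_cons.mpr ⟨hab', List.isChain_singleton b⟩⟩, ?_⟩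
            show τ + c a b τ ≤ τ + min (c a b τ) (chain (c a v) (c v b) τ)
            rw [min_eq_left hcmp]
          · refine ⟨[a, v, b], ⟨rfl, rfl, List.isChain_cons_cons.mpr ⟨hav',
              List.isChain_cons_cons.mpr ⟨hvb', List.isChain_singleton b⟩⟩⟩, ?_⟩
            show (τ + c a v τ) + c v b (τ + c a v τ) ≤
              τ + min (c a b τ) (chain (c a v) (c v b) τ)
            rw [min_eq_right (le_of_not_ge hcmp)]
            simp only [chain]; linarith
        · rw [hc''sc a b hav hbv hav' hvb' hpair hab']
          refine ⟨[a, v, b], ⟨rfl, rfl, List.isChain_cons_cons.mpr ⟨hav',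
            List.isChain_cons_cons.mpr ⟨hvb', List.isChain_singleton b⟩⟩⟩, ?_⟩
          show (τ + c a v τ) + c v b (τ + c a v τ) ≤ τ + chain (c a v) (c v b) τ
          simp only [chain]; linarith
      · have hab' : E' a b := by
          rcases hor with h | h
          · exact h
          · exact absurd h htrio
        rw [hc''old a b htrio]
        exact ⟨[a, b], ⟨rfl, rfl, List.isChain_cons_cons.mpr ⟨hab', List.isChain_singleton b⟩⟩, le_rfl⟩
    obtain ⟨seg, hsegP, hsegle⟩ := hseg
    -- glue
    obtain ⟨q1h, q1l, q1c⟩ := hq'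
    match q', q1h, q1l, q1c, hle' with
    | b' :: r', hh, q1l, q1c, hle' =>
      have hb : b' = b := by simpa using hh
      subst hb
      refine ⟨seg ++ r', IsPath_append E' hsegP ⟨rfl, q1l, q1c⟩, ?_⟩
      rw [arriveP_append c seg b' r' hsegP.2.1 τ]
      calc arriveP c (b' :: r') (arriveP c seg τ)
          ≤ arriveP c (b' :: r') (τ + c'' a b' τ) :=
            arriveP_mono c (fun _ _ => True) (fun x y _ => hF x y) (b' :: r')
              (chain'_true _) _ _ hsegle
        _ ≤ arriveP c'' (b' :: rest) (τ + c'' a b' τ) := hle'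
        _ = arriveP c'' (a :: b' :: rest) τ := rfl

lemma c''_le
    (hc''min : ∀ u w, u ≠ v → w ≠ v → E' u v → E' v w → ¬ (u = u₀ ∧ w = w₀) → E' u w →
      c'' u w = fun τ => min (c u w τ) (chain (c u v) (c v w) τ))
    (hc''old : ∀ u w, ¬ (E' u v ∧ E' v w ∧ ¬ (u = u₀ ∧ w = w₀)) → c'' u w = c u w)
    (u w : V) (hu : u ≠ v) (hw : w ≠ v) (he : E' u w) (τ : ℝ) :
    c'' u w τ ≤ c u w τ := by
  by_cases htrio : E' u v ∧ E' v w ∧ ¬ (u = u₀ ∧ w = w₀)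
  · rw [hc''min u w hu hw htrio.1 htrio.2.1 htrio.2.2 he]
    exact min_le_left _ _
  · rw [hc''old u w htrio]

lemma c''_chain_le
    (hc''min : ∀ u w, u ≠ v → w ≠ v → E' u v → E' v w → ¬ (u = u₀ ∧ w = w₀) → E' u w →
      c'' u w = fun τ => min (c u w τ) (chain (c u v) (c v w) τ))
    (hc''sc : ∀ u w, u ≠ v → w ≠ v → E' u v → E' v w → ¬ (u = u₀ ∧ w = w₀) → ¬ E' u w →
      c'' u w = chain (c u v) (c v w))
    (u w : V) (hu : u ≠ v) (hw : w ≠ v) (huv : E' u v) (hvw : E' v w)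
    (hpair : ¬ (u = u₀ ∧ w = w₀)) (τ : ℝ) :
    c'' u w τ ≤ chain (c u v) (c v w) τ := by
  by_cases he : E' u w
  · rw [hc''min u w hu hw huv hvw hpair he]
    exact min_le_right _ _
  · rw [hc''sc u w hu hw huv hvw hpair he]

lemma c''_fifo
    (hF : ∀ u w, FIFO (c u w))
    (hc''min : ∀ u w, u ≠ v → w ≠ v → E' u v → E' v w → ¬ (u = u₀ ∧ w = w₀) → E' u w →
      c'' u w = fun τ => min (c u w τ) (chain (c u v) (c v w) τ))
    (hc''sc : ∀ u w, u ≠ v → w ≠ v → E' u v → E' v w → ¬ (u = u₀ ∧ w = w₀) → ¬ E' u w →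
      c'' u w = chain (c u v) (c v w))
    (hc''old : ∀ u w, ¬ (E' u v ∧ E' v w ∧ ¬ (u = u₀ ∧ w = w₀)) → c'' u w = c u w)
    (u w : V) (hu : u ≠ v) (hw : w ≠ v) : FIFO (c'' u w) := by
  by_cases htrio : E' u v ∧ E' v w ∧ ¬ (u = u₀ ∧ w = w₀)
  · by_cases he : E' u w
    · rw [hc''min u w hu hw htrio.1 htrio.2.1 htrio.2.2 he]
      exact FIFO_min (hF u w) (FIFO_chain (hF u v) (hF v w))
    · rw [hc''sc u w hu hw htrio.1 htrio.2.1 htrio.2.2 he]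
      exact FIFO_chain (hF u v) (hF v w)
  · rw [hc''old u w htrio]
    exact hF u w

/-- Direction 2: any path in `G'` between non-`v` nodes can be matched in the pruned
contracted graph. -/
lemma dirB
    (hF : ∀ u w, FIFO (c u w)) (hnn : ∀ u w τ, 0 ≤ c u w τ)
    (D : ℝ → ℝ)
    (hDAtt : ∀ τ, ∃ p, IsPath E' u₀ w₀ p ∧ v ∉ p ∧ arriveP c p τ - τ = D τ)
    (hwitness : ∀ τ, D τ ≤ chain (c u₀ v) (c v w₀) τ)
    (hE'' : ∀ u w, E'' u w ↔ u ≠ v ∧ w ≠ v ∧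
      (E' u w ∨ (E' u v ∧ E' v w ∧ ¬ (u = u₀ ∧ w = w₀))))
    (hc''min : ∀ u w, u ≠ v → w ≠ v → E' u v → E' v w → ¬ (u = u₀ ∧ w = w₀) → E' u w →
      c'' u w = fun τ => min (c u w τ) (chain (c u v) (c v w) τ))
    (hc''sc : ∀ u w, u ≠ v → w ≠ v → E' u v → E' v w → ¬ (u = u₀ ∧ w = w₀) → ¬ E' u w →
      c'' u w = chain (c u v) (c v w))
    (hc''old : ∀ u w, ¬ (E' u v ∧ E' v w ∧ ¬ (u = u₀ ∧ w = w₀)) → c'' u w = c u w) :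
    ∀ n : ℕ, ∀ p : List V, p.length ≤ n → ∀ s t : V, ∀ τ : ℝ, s ≠ v → t ≠ v →
      IsPath E' s t p → ∃ q, IsPath E'' s t q ∧ arriveP c'' q τ ≤ arriveP c p τ := by
  -- abbreviations
  have hfifo'' : ∀ u w, u ≠ v → w ≠ v → FIFO (c'' u w) :=
    c''_fifo E' c v u₀ w₀ c'' hF hc''min hc''sc hc''old
  have hmono'' : ∀ (q : List V), q.Chain' E'' → ∀ τ τ' : ℝ, τ ≤ τ' →
      arriveP c'' q τ ≤ arriveP c'' q τ' := by
    intro q hq τ τ' h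
    refine arriveP_mono c'' (fun a b => a ≠ v ∧ b ≠ v)
      (fun a b hab => hfifo'' a b hab.1 hab.2) q ?_ τ τ' h
    exact hq.imp (fun {a b} h => ⟨((hE'' a b).mp h).1, ((hE'' a b).mp h).2.1⟩)
  have hmonoc : ∀ (q : List V), ∀ τ τ' : ℝ, τ ≤ τ' → arriveP c q τ ≤ arriveP c q τ' :=
    fun q τ τ' h => arriveP_mono c (fun _ _ => True) (fun x y _ => hF x y) q
      (chain'_true q) τ τ' h
  intro n
  induction n with
  | zero =>
    intro p hlen s t τ hs ht hp
    rw [Nat.le_zero, List.length_eq_zero_iff] at hlen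
    subst hlen
    simp [IsPath] at hp
  | succ n ih =>
    intro p hlen s t τ hs ht hp
    match p, hp, hlen with
    | [], hp, _ => simp [IsPath] at hp
    | [a], hp, _ =>
      obtain ⟨h1, h2, _⟩ := hp
      simp only [List.head?_cons, List.getLast?_singleton, Option.some.injEq] at h1 h2
      subst h1; subst h2
      exact ⟨[a], ⟨rfl, rfl, List.isChain_singleton a⟩, le_rfl⟩
    | a :: b :: rest, hp, hlen =>
      obtain ⟨h1, h2, h3⟩ := hp
      have ha : s = a := by symm; simpa using h1
      subst ha
      rw [List.getLast?_cons_cons] at h2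
      obtain ⟨hab, h3'⟩ := List.isChain_cons_cons.mp h3
      by_cases hbv : b = v
      · have hbv2 : v = b := hbv.symm
        subst hbv2
        match rest, h2, h3', hlen with
        | [], h2, _, _ =>
          have : v = t := by simpa using h2
          exact absurd this.symm ht
        | w :: rest₂, h2, h3', hlen =>
          obtain ⟨hvw', h3''⟩ := List.isChain_cons_cons.mp h3'
          by_cases hwv : w = v
          · have hwv2 : v = w := hwv.symm
            subst hwv2
            -- drop one v from a v-loop
            match rest₂, h2, h3'', hlen with
            | [], h2, _, _ =>
              rw [List.getLast?_cons_cons] at h2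
              have : v = t := by simpa using h2
              exact absurd this.symm ht
            | z :: rest₃, h2, h3'', hlen =>
              have hp' : IsPath E' s t (s :: v :: z :: rest₃) := by
                refine ⟨rfl, ?_, ?_⟩
                · rw [List.getLast?_cons_cons] at h2 ⊢
                  exact h2
                · exact List.isChain_cons_cons.mpr ⟨hab, h3''⟩
              have hlen' : (s :: v :: z :: rest₃).length ≤ n := by
                simp only [List.length_cons] at hlen ⊢; omega
              obtain ⟨q, hq, hle⟩ := ih (s :: v :: z :: rest₃) hlen' s t τ hs ht hp'
              refine ⟨q, hq, le_trans hle ?_⟩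
              show arriveP c (v :: z :: rest₃) (τ + c s v τ) ≤
                arriveP c (v :: z :: rest₃) ((τ + c s v τ) + c v v (τ + c s v τ))
              exact hmonoc _ _ _ (by linarith [hnn v v (τ + c s v τ)])
          · -- b = v, w ≠ v : contract the pair of edges s→v→w
            have hpw : IsPath E' w t (w :: rest₂) := by
              rw [List.getLast?_cons_cons] at h2
              exact ⟨rfl, h2, h3''⟩
            have hlenw : (w :: rest₂).length ≤ n := by
              simp only [List.length_cons] at hlen ⊢; omega
            obtain ⟨q', hq', hle'⟩ := ih (w :: rest₂) hlenw w t
              ((τ + c s v τ) + c v w (τ + c s v τ)) hwv ht hpw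
            have harr : arriveP c (s :: v :: w :: rest₂) τ =
                arriveP c (w :: rest₂) ((τ + c s v τ) + c v w (τ + c s v τ)) := rfl
            by_cases hpair : s = u₀ ∧ w = w₀
            · obtain ⟨he1, he2⟩ := hpair
              have he1' : u₀ = s := he1.symm
              have he2' : w₀ = w := he2.symm
              subst he1'
              subst he2'
              -- use the witness path
              obtain ⟨wp, hwpP, hwpv, hwpD⟩ := hDAtt τ
              have hwple : arriveP c wp τ ≤ (τ + c u₀ v τ) + c v w₀ (τ + c u₀ v τ) := by
                have h1' : arriveP c wp τ = τ + D τ := by linarith [hwpD]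
                have := hwitness τ
                simp only [chain] at this
                linarith
              have hmem : ∀ x ∈ wp, x ≠ v := fun x hx hxv => hwpv (hxv ▸ hx)
              have hchainR : wp.Chain' (fun a b => E' a b ∧ a ≠ v ∧ b ≠ v) :=
                chain'_imp_mem wp (fun x hx y hy h => ⟨h, hmem x hx, hmem y hy⟩) hwpP.2.2
              have hchainE'' : wp.Chain' E'' :=
                hchainR.imp (fun {a b} h => (hE'' a b).mpr ⟨h.2.1, h.2.2, Or.inl h.1⟩)
              have hwc'' : arriveP c'' wp τ ≤ arriveP c wp τ :=
                arriveP_le c'' c (fun a b => E' a b ∧ a ≠ v ∧ b ≠ v)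
                  (fun a b h => hfifo'' a b h.2.1 h.2.2)
                  (fun a b h τ' => c''_le E' c v u₀ w₀ c'' hc''min hc''old a b
                    h.2.1 h.2.2 h.1 τ')
                  wp hchainR τ
              obtain ⟨hq'1, hq'2, hq'3⟩ := hq'
              match q', hq'1, hq'2, hq'3, hle' with
              | w' :: r', hq'1, hq'2, hq'3, hle' =>
                have hw' : w₀ = w' := by symm; simpa using hq'1
                subst hw'
                refine ⟨wp ++ r', IsPath_append E''
                  ⟨hwpP.1, hwpP.2.1, hchainE''⟩ ⟨rfl, hq'2, hq'3⟩, ?_⟩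
                rw [arriveP_append c'' wp w₀ r' hwpP.2.1 τ, harr]
                calc arriveP c'' (w₀ :: r') (arriveP c'' wp τ)
                    ≤ arriveP c'' (w₀ :: r')
                        ((τ + c u₀ v τ) + c v w₀ (τ + c u₀ v τ)) :=
                      hmono'' (w₀ :: r') hq'3 _ _ (le_trans hwc'' hwple)
                  _ ≤ arriveP c (w₀ :: rest₂)
                        ((τ + c u₀ v τ) + c v w₀ (τ + c u₀ v τ)) := hle'
            · -- non-pruned shortcut
              have hE''sw : E'' s w := (hE'' s w).mpr ⟨hs, hwv, Or.inr ⟨hab, hvw', hpair⟩⟩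
              have hcle : c'' s w τ ≤ chain (c s v) (c v w) τ :=
                c''_chain_le E' c v u₀ w₀ c'' hc''min hc''sc s w hs hwv hab hvw' hpair τ
              obtain ⟨hq'1, hq'2, hq'3⟩ := hq'
              match q', hq'1, hq'2, hq'3, hle' with
              | w' :: r', hq'1, hq'2, hq'3, hle' =>
                have hw' : w = w' := by symm; simpa using hq'1
                subst hw'
                refine ⟨s :: w :: r', ⟨rfl, by rw [List.getLast?_cons_cons]; exact hq'2,
                  List.isChain_cons_cons.mpr ⟨hE''sw, hq'3⟩⟩, ?_⟩
                rw [harr]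
                show arriveP c'' (w :: r') (τ + c'' s w τ) ≤ _
                calc arriveP c'' (w :: r') (τ + c'' s w τ)
                    ≤ arriveP c'' (w :: r')
                        ((τ + c s v τ) + c v w (τ + c s v τ)) := by
                      refine hmono'' (w :: r') hq'3 _ _ ?_
                      simp only [chain] at hcle
                      linarith
                  _ ≤ arriveP c (w :: rest₂)
                        ((τ + c s v τ) + c v w (τ + c s v τ)) := hle'
      · -- b ≠ v : keep the edge
        have hE''sb : E'' s b := (hE'' s b).mpr ⟨hs, hbv, Or.inl hab⟩
        have hcle : c'' s b τ ≤ c s b τ :=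
          c''_le E' c v u₀ w₀ c'' hc''min hc''old s b hs hbv hab τ
        have hpb : IsPath E' b t (b :: rest) := ⟨rfl, h2, h3'⟩
        have hlenb : (b :: rest).length ≤ n := by
          simp only [List.length_cons] at hlen ⊢; omega
        obtain ⟨q', hq', hle'⟩ := ih (b :: rest) hlenb b t (τ + c s b τ) hbv ht hpb
        obtain ⟨hq'1, hq'2, hq'3⟩ := hq'
        match q', hq'1, hq'2, hq'3, hle' with
        | b' :: r', hq'1, hq'2, hq'3, hle' =>
          have hb' : b = b' := by symm; simpa using hq'1
          subst hb'
          refine ⟨s :: b :: r', ⟨rfl, by rw [List.getLast?_cons_cons]; exact hq'2,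
            List.isChain_cons_cons.mpr ⟨hE''sb, hq'3⟩⟩, ?_⟩
          show arriveP c'' (b :: r') (τ + c'' s b τ) ≤ arriveP c (b :: rest) (τ + c s b τ)
          calc arriveP c'' (b :: r') (τ + c'' s b τ)
              ≤ arriveP c'' (b :: r') (τ + c s b τ) :=
                hmono'' (b :: r') hq'3 _ _ (by linarith)
            _ ≤ arriveP c (b :: rest) (τ + c s b τ) := hle'

end Main

theorem witness_pruning_sound {V : Type*}
    (E' : V → V → Prop) (c : V → V → ℝ → ℝ)
    (hF : ∀ u w, FIFO (c u w)) (hnn : ∀ u w τ, 0 ≤ c u w τ)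
    (v u₀ w₀ : V) (hu₀ : u₀ ≠ v) (hw₀ : w₀ ≠ v)
    (huv : E' u₀ v) (hvw : E' v w₀)
    -- the witness travel-time profile `D` from `u₀` to `w₀` in `G' − v` (assumed attained)
    (D : ℝ → ℝ)
    (hDAtt : ∀ τ, ∃ p, IsPath E' u₀ w₀ p ∧ v ∉ p ∧ arriveP c p τ - τ = D τ)
    (hDMin : ∀ τ p, IsPath E' u₀ w₀ p → v ∉ p → D τ ≤ arriveP c p τ - τ)
    -- the witness is never slower than the candidate shortcut
    (hwitness : ∀ τ, D τ ≤ chain (c u₀ v) (c v w₀) τ)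
    -- the contracted graph where the shortcut `(u₀, w₀)` is omitted
    (E'' : V → V → Prop)
    (hE'' : ∀ u w, E'' u w ↔ u ≠ v ∧ w ≠ v ∧
      (E' u w ∨ (E' u v ∧ E' v w ∧ ¬ (u = u₀ ∧ w = w₀))))
    (c'' : V → V → ℝ → ℝ)
    (hc''min : ∀ u w, u ≠ v → w ≠ v → E' u v → E' v w → ¬ (u = u₀ ∧ w = w₀) → E' u w →
      c'' u w = fun τ => min (c u w τ) (chain (c u v) (c v w) τ))
    (hc''sc : ∀ u w, u ≠ v → w ≠ v → E' u v → E' v w → ¬ (u = u₀ ∧ w = w₀) → ¬ E' u w →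
      c'' u w = chain (c u v) (c v w))
    (hc''old : ∀ u w, ¬ (E' u v ∧ E' v w ∧ ¬ (u = u₀ ∧ w = w₀)) → c'' u w = c u w)
    (EA' EA'' : V → V → ℝ → ℝ)
    (hAtt' : ∀ s t, s ≠ v → t ≠ v → ∀ τ, ∃ p, IsPath E' s t p ∧ arriveP c p τ = EA' s t τ)
    (hMin' : ∀ s t τ p, IsPath E' s t p → EA' s t τ ≤ arriveP c p τ)
    (hAtt'' : ∀ s t, s ≠ v → t ≠ v → ∀ τ, ∃ p, IsPath E'' s t p ∧ arriveP c'' p τ = EA'' s t τ)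
    (hMin'' : ∀ s t τ p, IsPath E'' s t p → EA'' s t τ ≤ arriveP c'' p τ) :
    ∀ s t, s ≠ v → t ≠ v → ∀ τ, EA'' s t τ = EA' s t τ := by
  intro s t hs ht τ
  apply le_antisymm
  · obtain ⟨p, hp, hpe⟩ := hAtt' s t hs ht τ
    obtain ⟨q, hq, hle⟩ := dirB E' c v u₀ w₀ E'' c'' hF hnn D hDAtt hwitness hE''
      hc''min hc''sc hc''old p.length p le_rfl s t τ hs ht hp
    calc EA'' s t τ ≤ arriveP c'' q τ := hMin'' s t τ q hq
      _ ≤ arriveP c p τ := hle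
      _ = EA' s t τ := hpe
  · obtain ⟨p, hp, hpe⟩ := hAtt'' s t hs ht τ
    obtain ⟨q, hq, hle⟩ := dirA E' c v u₀ w₀ E'' c'' hF hE'' hc''min hc''sc hc''old
      p s t τ hp
    calc EA' s t τ ≤ arriveP c q τ := hMin' s t τ q hq
      _ ≤ arriveP c'' p τ := hle
      _ = EA'' s t τ := hpe
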